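/- Let k be a principal ideal domain, Q an ordered set, and B : Q → Set a functor. The following are equivalent: (i) for every q ∈ Q, the colimit projection ι_q : B(q) → colim B is injective; (ii) the persistence module k_Q(B) (pointwise free k-module on B) is upper set decomposable; (iii) for every q ∈ Q, the colimit projection k_Q(B)(q) → colim k_Q(B) is a monomorphism of k-modules. -/

import Mathlib

open CategoryTheory CategoryTheory.Limits

namespace SpanningTrees

/-- The upper set module `pt[U] : Q → Set` of an upper set `U ⊆ Q`: it sends `q` to a
one-point set if `q ∈ U` and to the empty set otherwise, with the evident maps. -/
def ptU (Q : Type) [PartialOrder Q] (U : Set Q) (hU : IsUpperSet U) : Q ⥤ Type where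
  obj q := PLift (q ∈ U)
  map {q q'} h := TypeCat.ofHom fun p => PLift.up (hU (leOfHom h) p.down)

/-- A persistence module `M : Q ⥤ Mod_k` is upper set decomposable if it is isomorphic
to a direct sum `⊕ᵢ k_Q(pt[Uᵢ])` of pointwise free modules on upper set modules. -/
def UpperSetDecomposable (k : Type) [CommRing k] (Q : Type) [PartialOrder Q]
    (M : Q ⥤ ModuleCat k) : Prop :=
  ∃ (I : Type) (U : I → Set Q) (hU : ∀ i, IsUpperSet (U i)),
    Nonempty (M ≅ ∐ fun i : I => ptU Q (U i) (hU i) ⋙ ModuleCat.free k)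

/-!
If all colimit projections of `B` are injective, then `B` is the disjoint union, over
`c ∈ colim B`, of the subfunctors of elements mapping to `c`; each of them is `pt[U_c]` for the
upper set `U_c` of stages at which `c` is born. Since the free functor is a left adjoint it
commutes with this coproduct, so `k_Q(B)` is upper set decomposable. Conversely, a disjoint union
of upper set modules has injective colimit projections, and the free functor preserves
colimits and (over a nontrivial ring) preserves and reflects monomorphisms, so it turns
injectivity of the projections of `B` into monomorphy of those of `k_Q(B)` and back.
-/

universe u

noncomputable section

section ColimitMono

variable {J C D : Type*} [Category J] [Category C] [Category D]

theorem mono_colimit_ι_iff_of_iso {F F' : J ⥤ C} [HasColimit F] [HasColimit F'] (e : F ≅ F')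
    (j : J) : Mono (colimit.ι F j) ↔ Mono (colimit.ι F' j) := by
  rw [← mono_comp_iff_of_mono (colimit.ι F j) (HasColimit.isoOfNatIso e).hom,
    HasColimit.isoOfNatIso_ι_hom, mono_comp_iff_of_isIso]

theorem mono_colimit_ι_comp_iff (F : J ⥤ C) (G : C ⥤ D) [HasColimit F] [HasColimit (F ⋙ G)]
    [PreservesColimit F G] [G.PreservesMonomorphisms] [G.ReflectsMonomorphisms] (j : J) :
    Mono (colimit.ι (F ⋙ G) j) ↔ Mono (colimit.ι F j) := by
  rw [← ι_preservesColimitIso_hom G F j, mono_comp_iff_of_mono, G.mono_map_iff_mono]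

end ColimitMono

section Free

variable (k : Type u) [Ring k]

instance : (ModuleCat.free k).PreservesMonomorphisms where
  preserves f hf := (ModuleCat.mono_iff_injective _).2 <|
    Finsupp.mapDomain_injective ((mono_iff_injective f).1 hf)

instance [Nontrivial k] : (ModuleCat.free k).Faithful where
  map_injective {X Y} {f g} h := by
    ext x
    have hx := congr($h (ModuleCat.freeMk x))
    rw [ModuleCat.free_map_apply, ModuleCat.free_map_apply] at hx
    exact Finsupp.single_left_injective one_ne_zero hx

instance : PreservesColimits (ModuleCat.free k) :=
  (ModuleCat.adj k).leftAdjoint_preservesColimits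

theorem mono_colimit_ι_comp_free_iff [Nontrivial k] {J : Type u} [SmallCategory J]
    (B : J ⥤ Type u) (j : J) :
    Mono (colimit.ι (B ⋙ ModuleCat.free k) j) ↔ Function.Injective (colimit.ι B j) := by
  rw [mono_colimit_ι_comp_iff, mono_iff_injective]

end Free

section Sigma

variable {J : Type u} [SmallCategory J] {I : Type u}

def sigmaFunctor (F : I → J ⥤ Type u) : J ⥤ Type u where
  obj j := Σ i, (F i).obj j
  map f := TypeCat.ofHom fun p => ⟨p.1, (F p.1).map f p.2⟩

def sigmaCocone (F : I → J ⥤ Type u) : Cocone (Discrete.functor F) where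
  pt := sigmaFunctor F
  ι := Discrete.natTrans fun i =>
    { app := fun _ => TypeCat.ofHom fun x => ⟨i.as, x⟩ }

def isColimitSigmaCocone (F : I → J ⥤ Type u) : IsColimit (sigmaCocone F) where
  desc c :=
    { app := fun j => TypeCat.ofHom fun p => (c.ι.app ⟨p.1⟩).app j p.2
      naturality := fun _ _ f => by
        ext p
        exact types_congr_hom ((c.ι.app ⟨p.1⟩).naturality f) p.2 }
  uniq c m hm := by
    ext j ⟨i, x⟩
    exact types_congr_hom (congr_app (hm ⟨i⟩) j) x

def sigmaIso (F : I → J ⥤ Type u) : ∐ F ≅ sigmaFunctor F :=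
  colimit.isoColimitCocone ⟨sigmaCocone F, isColimitSigmaCocone F⟩

/-- The summand index is a cocone, so it factors through the colimit. -/
theorem injective_colimit_ι_sigmaFunctor (F : I → J ⥤ Type u)
    [∀ i j, Subsingleton ((F i).obj j)] (j : J) :
    Function.Injective (colimit.ι (sigmaFunctor F) j) := by
  let index : Cocone (sigmaFunctor F) :=
    { pt := I
      ι := { app := fun _ => TypeCat.ofHom Sigma.fst } }
  intro p p' h
  have h_index := congr(colimit.desc _ index $h)
  rw [colimit.ι_desc_apply, colimit.ι_desc_apply] at h_index
  exact Sigma.fst_injective h_index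

def sigmaCompFreeIso (k : Type u) [Ring k] (F : I → J ⥤ Type u) :
    sigmaFunctor F ⋙ ModuleCat.free k ≅ ∐ fun i => F i ⋙ ModuleCat.free k :=
  Functor.isoWhiskerRight (sigmaIso F).symm _ ≪≫
    PreservesCoproduct.iso ((Functor.whiskeringRight J _ _).obj (ModuleCat.free k)) F

end Sigma

section UpperSets

variable {Q : Type} [PartialOrder Q]

instance (U : Set Q) (hU : IsUpperSet U) (q : Q) : Subsingleton ((ptU Q U hU).obj q) :=
  inferInstanceAs (Subsingleton (PLift _))

variable (B : Q ⥤ Type)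

def colimitSupport (c : colimit B) : Set Q :=
  {q | c ∈ Set.range (colimit.ι B q)}

theorem isUpperSet_colimitSupport (c : colimit B) : IsUpperSet (colimitSupport B c) := by
  rintro q q' hqq' ⟨b, rfl⟩
  exact ⟨B.map (homOfLE hqq') b, colimit.w_apply B (homOfLE hqq') b⟩

def toSigmaColimitSupport :
    B ⟶ sigmaFunctor fun c => ptU Q (colimitSupport B c) (isUpperSet_colimitSupport B c) where
  app q := TypeCat.ofHom fun b => ⟨colimit.ι B q b, ⟨b, rfl⟩⟩
  naturality q q' f := by
    ext b
    apply Sigma.fst_injective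
    exact colimit.w_apply B f b

theorem isIso_toSigmaColimitSupport (hB : ∀ q, Function.Injective (colimit.ι B q)) :
    IsIso (toSigmaColimitSupport B) := by
  rw [NatTrans.isIso_iff_isIso_app]
  intro q
  rw [isIso_iff_bijective]
  constructor
  · intro b b' h
    exact hB q (congrArg Sigma.fst h)
  · rintro ⟨c, ⟨b, rfl⟩⟩
    exact ⟨b, rfl⟩

theorem upperSetDecomposable_comp_free_of_injective (k : Type) [CommRing k]
    (hB : ∀ q, Function.Injective (colimit.ι B q)) :
    UpperSetDecomposable k Q (B ⋙ ModuleCat.free k) :=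
  haveI := isIso_toSigmaColimitSupport B hB
  ⟨colimit B, colimitSupport B, isUpperSet_colimitSupport B,
    ⟨Functor.isoWhiskerRight (asIso (toSigmaColimitSupport B)) _ ≪≫ sigmaCompFreeIso k _⟩⟩

end UpperSets

theorem UpperSetDecomposable.mono_colimit_ι {k : Type} [CommRing k] [Nontrivial k]
    {Q : Type} [PartialOrder Q] {M : Q ⥤ ModuleCat k} (hM : UpperSetDecomposable k Q M) (q : Q) :
    Mono (colimit.ι M q) := by
  obtain ⟨I, U, hU, ⟨e⟩⟩ := hM
  rw [mono_colimit_ι_iff_of_iso (e ≪≫ (sigmaCompFreeIso k _).symm),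
    mono_colimit_ι_comp_free_iff]
  exact injective_colimit_ι_sigmaFunctor _ q

end

theorem upperSetDecomposable_tfae_general
    (k : Type) [CommRing k] [IsDomain k]
    (Q : Type) [PartialOrder Q] (B : Q ⥤ Type) :
    ((∀ q : Q, Function.Injective (colimit.ι B q)) ↔
      UpperSetDecomposable k Q (B ⋙ ModuleCat.free k)) ∧
    (UpperSetDecomposable k Q (B ⋙ ModuleCat.free k) ↔
      ∀ q : Q, Mono (colimit.ι (B ⋙ ModuleCat.free k) q)) := by
  have injective_iff_mono : (∀ q, Function.Injective (colimit.ι B q)) ↔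
      ∀ q, Mono (colimit.ι (B ⋙ ModuleCat.free k) q) :=
    forall_congr' fun q => (mono_colimit_ι_comp_free_iff k B q).symm
  refine ⟨⟨upperSetDecomposable_comp_free_of_injective B k, fun h => ?_⟩,
    ⟨UpperSetDecomposable.mono_colimit_ι, fun h => ?_⟩⟩
  · exact injective_iff_mono.2 h.mono_colimit_ι
  · exact upperSetDecomposable_comp_free_of_injective B k (injective_iff_mono.2 h)

/-- For a persistent set `B : Q → Set`, the following are equivalent:
(i) all colimit projections `B(q) → colim B` are injective;
(ii) the pointwise free persistence module `k_Q(B)` is upper set decomposable;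
(iii) all colimit projections `k_Q(B)(q) → colim k_Q(B)` are monomorphisms. -/
theorem upperSetDecomposable_tfae
    (k : Type) [CommRing k] [IsDomain k] [IsPrincipalIdealRing k]
    (Q : Type) [PartialOrder Q] (B : Q ⥤ Type) :
    ((∀ q : Q, Function.Injective (colimit.ι B q)) ↔
      UpperSetDecomposable k Q (B ⋙ ModuleCat.free k)) ∧
    (UpperSetDecomposable k Q (B ⋙ ModuleCat.free k) ↔
      ∀ q : Q, Mono (colimit.ι (B ⋙ ModuleCat.free k) q)) :=
  upperSetDecomposable_tfae_general k Q B

end SpanningTrees
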